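/- Fix p with 2 < p < 3 and ε₋ with 0 < ε₋ < 1, and set ε₊ := 1/ε₋. Define a real sequence by α₀ := 0 and α_{n+1} := (max(ε₋, min(α_n, ε₊)))^{2-p}. Then for every n ≥ 1 one has α_n = ε₋^{(2-p)^n}; in particular α_n → 1 as n → ∞. -/
import Mathlib


open Filter

/-- for `2 < p < 3`, `0 < ε₋ < 1`, `ε₊ = 1/ε₋`, the Kačanov iterates
`α₀ = 0`, `α_{n+1} = (clamp α_n)^(2-p)` satisfy `α_n = ε₋^((2-p)^n)` for `n ≥ 1`;
in particular `α_n → 1`. -/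
theorem stmt_17 (p εm : ℝ) (hp1 : 2 < p) (hp2 : p < 3) (hεm : 0 < εm) (hεm1 : εm < 1)
    (α : ℕ → ℝ) (h0 : α 0 = 0)
    (hrec : ∀ n : ℕ, α (n + 1) = (max εm (min (α n) (1 / εm))) ^ (2 - p)) :
    (∀ n : ℕ, 1 ≤ n → α n = εm ^ ((2 - p) ^ n)) ∧
    Tendsto α atTop (nhds 1) := by
  have habs : |2 - p| < 1 := by
    rw [abs_sub_lt_iff]; constructor <;> linarith
  have key : ∀ n : ℕ, 1 ≤ n → α n = εm ^ ((2 - p) ^ n) := by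
    intro n hn
    induction n with
    | zero => omega
    | succ k ih =>
      rcases Nat.eq_zero_or_pos k with hk | hk
      · subst hk
        rw [hrec 0, h0, min_eq_left (by positivity), max_eq_left hεm.le, pow_one]
      · have hαk := ih hk
        have habsk : |(2 - p) ^ k| ≤ 1 := by
          rw [abs_pow]; exact pow_le_one₀ (abs_nonneg _) habs.le
        obtain ⟨hlo, hhi⟩ := abs_le.mp habsk
        have hub : εm ^ ((2 - p) ^ k) ≤ 1 / εm := by
          calc εm ^ ((2 - p) ^ k) ≤ εm ^ (-1 : ℝ) :=
                Real.rpow_le_rpow_of_exponent_ge hεm hεm1.le hlo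
            _ = 1 / εm := by rw [Real.rpow_neg_one, one_div]
        have hlb : εm ≤ εm ^ ((2 - p) ^ k) := by
          calc εm = εm ^ (1 : ℝ) := (Real.rpow_one εm).symm
            _ ≤ εm ^ ((2 - p) ^ k) :=
                Real.rpow_le_rpow_of_exponent_ge hεm hεm1.le hhi
        rw [hrec k, hαk, min_eq_left hub, max_eq_right hlb,
          ← Real.rpow_mul hεm.le, ← pow_succ]
  refine ⟨key, ?_⟩
  have h1 : Tendsto (fun n : ℕ => (2 - p) ^ n) atTop (nhds 0) :=
    tendsto_pow_atTop_nhds_zero_of_abs_lt_one habs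
  have h2 : Tendsto (fun n : ℕ => εm ^ ((2 - p) ^ n)) atTop (nhds 1) := by
    simpa [Real.rpow_zero] using
      (tendsto_const_nhds.rpow h1 (Or.inl hεm.ne') :
        Tendsto (fun n : ℕ => εm ^ ((2 - p) ^ n)) atTop (nhds (εm ^ (0:ℝ))))
  refine h2.congr' ?_
  filter_upwards [eventually_ge_atTop 1] with n hn
  exact (key n hn).symm
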